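/- Let d ≥ 1, let 0 ≤ α ≤ β < 1, and let r_α, r_β > 0 be such that (B_k^{r_α,α})_{k∈ℤ^d∖{0}} and (B_j^{r_β,β})_{j∈ℤ^d∖{0}} both cover ℝ^d and both have the finite overlap property. Then the α-covering is almost subordinate to the β-covering: there exists n ∈ ℕ₀ such that for every k ∈ ℤ^d∖{0} there is j ∈ ℤ^d∖{0} with B_k^{r_α,α} ⊂ ⋃_{l ∈ j^{n*}} B_l^{r_β,β}, where j^{0*} = {j} and j^{(m+1)*} = {l ∈ ℤ^d∖{0} : ∃ l′ ∈ j^{m*} with B_l^{r_β,β} ∩ B_{l′}^{r_β,β} ≠ ∅}. -/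

import Mathlib

/-!
Write `B_v = B(‖v‖^{α₀} v, r ‖v‖^{α₀})`. A point `ξ ∈ B_l^β ∩ B_k^α` forces
`‖l‖^{β₀+1} ≍ ‖ξ‖ ≍ ‖k‖^{α₀+1} =: K`, so every β-ball meeting `B_k^α` has radius `≍ K^β`, while
`B_k^α` itself has radius `≍ K^α ≤ K^β`. Since `x ↦ ‖x‖^γ x` expands distances at least by the
smaller of the two weights `‖x‖^γ, ‖y‖^γ`, the indices of these β-balls are at bounded mutual
distance, so there are at most `N` of them, uniformly in `k`. As `B_k^α` is connected and covered
by them, every neighbourhood step from one of them reaches a new one until all are reached, so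
`n = N` works.
-/

open MeasureTheory
open scoped ENNReal

/-- The integer lattice point `k ∈ ℤ^d` viewed as an element of `ℝ^d`. -/
noncomputable def intVec {d : ℕ} (k : Fin d → ℤ) : EuclideanSpace ℝ (Fin d) :=
  (EuclideanSpace.equiv (Fin d) ℝ).symm (fun i => (k i : ℝ))

/-- The ball `B_k^r = {ξ ∈ ℝ^d : |ξ - |k|^{α₀} k| < r |k|^{α₀}}` with `α₀ = α/(1-α)`, a member of
the standard `α`-covering of the frequency space `ℝ^d`. -/
noncomputable def alphaBall (d : ℕ) (α r : ℝ) (k : Fin d → ℤ) :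
    Set (EuclideanSpace ℝ (Fin d)) :=
  Metric.ball ((‖intVec k‖ ^ (α / (1 - α))) • intVec k) (r * ‖intVec k‖ ^ (α / (1 - α)))

/-- Iterated neighbor sets of an index `j` with respect to the covering `B`:
`j^{0*} = {j}` and `j^{(m+1)*} = {l : B_l meets B_{l'} for some l' ∈ j^{m*}}`. -/
def neighborIter {ι X : Type*} (B : ι → Set X) (j : ι) : ℕ → Set ι
  | 0 => {j}
  | m + 1 => {l | ∃ l' ∈ neighborIter B j m, (B l ∩ B l').Nonempty}

namespace neighborIter

variable {ι X : Type*} {B : ι → Set X} {j i : ι} {m : ℕ}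

theorem mem_succ_of_mem (hi : i ∈ neighborIter B j m) (hne : (B i).Nonempty) :
    i ∈ neighborIter B j (m + 1) :=
  ⟨i, hi, by rwa [Set.inter_self]⟩

theorem self_mem (hj : (B j).Nonempty) : ∀ m, j ∈ neighborIter B j m
  | 0 => rfl
  | m + 1 => mem_succ_of_mem (self_mem hj m) hj

variable [TopologicalSpace X] {S : Set X}

theorem exists_mem_succ_of_isPreconnected (hB : ∀ i, IsOpen (B i)) (hS : IsPreconnected S)
    (hcov : S ⊆ ⋃ i, B i) (hin : ∃ i ∈ neighborIter B j m, (B i ∩ S).Nonempty)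
    (hout : ∃ i ∉ neighborIter B j m, (B i ∩ S).Nonempty) :
    ∃ i ∉ neighborIter B j m, (B i ∩ S).Nonempty ∧ i ∈ neighborIter B j (m + 1) := by
  obtain ⟨i₀, hi₀, x₀, hx₀B, hx₀S⟩ := hin
  obtain ⟨i₁, hi₁, x₁, hx₁B, hx₁S⟩ := hout
  obtain ⟨x, hxS, hxU, hxV⟩ := hS (⋃ i ∈ neighborIter B j m, B i) (⋃ i ∉ neighborIter B j m, B i)
    (isOpen_biUnion fun i _ => hB i) (isOpen_biUnion fun i _ => hB i)
    (fun y hy => by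
      obtain ⟨i, hyi⟩ := Set.mem_iUnion.1 (hcov hy)
      by_cases h : i ∈ neighborIter B j m
      exacts [Or.inl (Set.mem_biUnion h hyi), Or.inr (Set.mem_biUnion h hyi)])
    ⟨x₀, hx₀S, Set.mem_biUnion hi₀ hx₀B⟩ ⟨x₁, hx₁S, Set.mem_biUnion hi₁ hx₁B⟩
  obtain ⟨i, hi, hxi⟩ := Set.mem_iUnion₂.1 hxU
  obtain ⟨i', hi', hxi'⟩ := Set.mem_iUnion₂.1 hxV
  exact ⟨i', hi', ⟨x, hxi', hxS⟩, i, hi, x, hxi', hxi⟩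

theorem subset_or_le_encard (hB : ∀ i, IsOpen (B i)) (hS : IsPreconnected S)
    (hcov : S ⊆ ⋃ i, B i) (hj : (B j ∩ S).Nonempty) (m : ℕ) :
    {i | (B i ∩ S).Nonempty} ⊆ neighborIter B j m ∨
      (m + 1 : ℕ∞) ≤ ({i | (B i ∩ S).Nonempty} ∩ neighborIter B j m).encard := by
  set J := {i | (B i ∩ S).Nonempty}
  have hmono : ∀ {m i}, i ∈ J → i ∈ neighborIter B j m → i ∈ neighborIter B j (m + 1) :=
    fun hiJ hi => mem_succ_of_mem hi (hiJ.mono Set.inter_subset_left)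
  induction m with
  | zero =>
    refine (em _).imp id fun _ => ?_
    simpa using Set.one_le_encard_iff_nonempty.2 (⟨j, hj, rfl⟩ : (J ∩ neighborIter B j 0).Nonempty)
  | succ m ih =>
    refine or_iff_not_imp_left.2 fun hJ => ?_
    have ih := ih.resolve_left fun h => hJ fun i hi => hmono hi (h hi)
    obtain ⟨i, hi, hiJ⟩ := Set.not_subset.1 hJ
    obtain ⟨i', hi', hi'J, hi'succ⟩ := exists_mem_succ_of_isPreconnected hB hS hcov
      ⟨j, self_mem (hj.mono Set.inter_subset_left) m, hj⟩
      ⟨i, fun h => hiJ (hmono hi h), hi⟩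
    calc ((m + 1 + 1 : ℕ) : ℕ∞) ≤ (J ∩ neighborIter B j m).encard + 1 := by
          push_cast; gcongr
      _ = (insert i' (J ∩ neighborIter B j m)).encard :=
          (Set.encard_insert_of_notMem fun h => hi' h.2).symm
      _ ≤ (J ∩ neighborIter B j (m + 1)).encard := by
          refine Set.encard_le_encard (Set.insert_subset_iff.2 ⟨?_, fun l hl => ?_⟩)
          exacts [⟨hi'J, hi'succ⟩, ⟨hl.1, hmono hl.1 hl.2⟩]

theorem _root_.IsPreconnected.subset_biUnion_neighborIter (hB : ∀ i, IsOpen (B i))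
    (hS : IsPreconnected S) (hcov : S ⊆ ⋃ i, B i) {N : ℕ}
    (hN : {i | (B i ∩ S).Nonempty}.encard ≤ N) (hj : (B j ∩ S).Nonempty) :
    S ⊆ ⋃ l ∈ neighborIter B j N, B l := by
  rcases subset_or_le_encard hB hS hcov hj N with h | h
  · intro x hx
    obtain ⟨i, hxi⟩ := Set.mem_iUnion.1 (hcov hx)
    exact Set.mem_biUnion (h ⟨x, hxi, hx⟩) hxi
  · have := h.trans ((Set.encard_le_encard Set.inter_subset_left).trans hN)
    norm_cast at this
    omega

end neighborIter

section PowerBall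

open Real Metric

theorem rpow_add_one_rpow_div_add_one {x b : ℝ} (hx : 0 ≤ x) (hb : 0 ≤ b) :
    (x ^ (b + 1)) ^ (b / (b + 1)) = x ^ b := by
  rw [← rpow_mul hx]
  congr 1
  field_simp

variable {E : Type*} [NormedAddCommGroup E]

theorem norm_le_norm_add_of_inner_nonneg [InnerProductSpace ℝ E] {x y : E} (h : 0 ≤ inner ℝ x y) : ‖x‖ ≤ ‖x + y‖ := by
  refine (pow_le_pow_iff_left₀ (norm_nonneg _) (norm_nonneg _) two_ne_zero).1 ?_
  rw [norm_add_sq_real]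
  nlinarith [norm_nonneg y]

theorem mul_norm_sub_le_norm_rpow_smul_sub [InnerProductSpace ℝ E]
    {γ t : ℝ} (hγ : 0 ≤ γ) {x y : E} (hx : t ≤ ‖x‖ ^ γ) (hy : t ≤ ‖y‖ ^ γ) :
    t * ‖x - y‖ ≤ ‖‖x‖ ^ γ • x - ‖y‖ ^ γ • y‖ := by
  wlog hxy : ‖y‖ ≤ ‖x‖ generalizing x y
  · rw [norm_sub_rev, norm_sub_rev (‖x‖ ^ γ • x)]
    exact this hy hx (le_of_not_ge hxy)
  have hpow : ‖y‖ ^ γ ≤ ‖x‖ ^ γ := rpow_le_rpow (norm_nonneg _) hxy hγ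
  -- `x - y` makes an acute angle with `x` because `‖y‖ ≤ ‖x‖`.
  have hacute : 0 ≤ inner ℝ (x - y) x := by
    rw [inner_sub_left, real_inner_self_eq_norm_sq]
    nlinarith [real_inner_le_norm y x, norm_nonneg x]
  have hsplit : ‖x‖ ^ γ • x - ‖y‖ ^ γ • y = ‖y‖ ^ γ • (x - y) + (‖x‖ ^ γ - ‖y‖ ^ γ) • x := by
    rw [smul_sub, sub_smul]; abel
  calc t * ‖x - y‖ ≤ ‖y‖ ^ γ * ‖x - y‖ := by gcongr
    _ = ‖‖y‖ ^ γ • (x - y)‖ := by rw [norm_smul, norm_of_nonneg (by positivity)]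
    _ ≤ ‖‖x‖ ^ γ • x - ‖y‖ ^ γ • y‖ := by
      rw [hsplit]
      refine norm_le_norm_add_of_inner_nonneg ?_
      rw [real_inner_smul_left, real_inner_smul_right]
      exact mul_nonneg (by positivity) (mul_nonneg (sub_nonneg.2 hpow) hacute)

section Normed

variable [NormedSpace ℝ E] {e f r s : ℝ} {v w ξ : E}

/-- `alphaBall d α r k` is `powerBall (α / (1 - α)) r (intVec k)`. -/
def powerBall (e r : ℝ) (v : E) : Set E :=
  ball (‖v‖ ^ e • v) (r * ‖v‖ ^ e)

theorem norm_rpow_smul_self (hv : 0 < ‖v‖) : ‖‖v‖ ^ e • v‖ = ‖v‖ ^ (e + 1) := by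
  rw [norm_smul, norm_of_nonneg (rpow_nonneg hv.le e), rpow_add_one hv.ne']

theorem norm_lt_of_mem_powerBall (hr : 0 ≤ r) (hv : 1 ≤ ‖v‖)
    (hξ : ξ ∈ powerBall e r v) : ‖ξ‖ < (1 + r) * ‖v‖ ^ (e + 1) := by
  rw [powerBall, mem_ball_iff_norm] at hξ
  have hc := norm_rpow_smul_self (e := e) (zero_lt_one.trans_le hv)
  have hpow : ‖v‖ ^ e ≤ ‖v‖ ^ (e + 1) := rpow_le_rpow_of_exponent_le hv (by linarith)
  have := norm_le_norm_add_norm_sub' ξ (‖v‖ ^ e • v)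
  nlinarith

theorem rpow_add_one_le_of_mem_powerBall (he : 0 ≤ e) (hr : 0 ≤ r) (hv : 0 < ‖v‖)
    (hξ : ξ ∈ powerBall e r v) : ‖v‖ ^ (e + 1) ≤ 2 * ‖ξ‖ + (2 * r) ^ (e + 1) := by
  rw [powerBall, mem_ball_iff_norm'] at hξ
  have hc := norm_rpow_smul_self (e := e) hv
  have hlower : ‖v‖ ^ (e + 1) - r * ‖v‖ ^ e < ‖ξ‖ := by
    linarith [norm_le_norm_add_norm_sub' (‖v‖ ^ e • v) ξ]
  rcases le_or_gt ‖v‖ (2 * r) with hsmall | hlarge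
  · linarith [rpow_le_rpow hv.le hsmall (by linarith : 0 ≤ e + 1), norm_nonneg ξ]
  · have : 2 * r * ‖v‖ ^ e ≤ ‖v‖ ^ (e + 1) := by
      rw [rpow_add_one hv.ne', mul_comm (‖v‖ ^ e)]
      exact mul_le_mul_of_nonneg_right hlarge.le (rpow_nonneg hv.le e)
    have : 0 ≤ (2 * r) ^ (e + 1) := rpow_nonneg (by linarith) _
    linarith

theorem rpow_add_one_le_mul_of_powerBall_inter_nonempty (he : 0 ≤ e) (hf : 0 ≤ f)
    (hr : 0 ≤ r) (hs : 0 ≤ s) (hv : 0 < ‖v‖) (hw : 1 ≤ ‖w‖)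
    (h : (powerBall e r v ∩ powerBall f s w).Nonempty) :
    ‖v‖ ^ (e + 1) ≤ (2 * (1 + s) + (2 * r) ^ (e + 1)) * ‖w‖ ^ (f + 1) := by
  obtain ⟨ξ, hξv, hξw⟩ := h
  have h1 := rpow_add_one_le_of_mem_powerBall he hr hv hξv
  have h2 := norm_lt_of_mem_powerBall hs hw hξw
  have h3 : 1 ≤ ‖w‖ ^ (f + 1) := one_le_rpow hw (by linarith)
  have h4 : 0 ≤ (2 * r) ^ (e + 1) := rpow_nonneg (by linarith) _
  nlinarith

end Normed

theorem exists_norm_sub_le_of_powerBall_inter_nonempty [InnerProductSpace ℝ E] {a b r s : ℝ}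
    (ha : 0 ≤ a) (hab : a ≤ b) (hr : 0 ≤ r) (hs : 0 ≤ s) :
    ∃ C, ∀ k l l' : E, 1 ≤ ‖k‖ → 1 ≤ ‖l‖ → 1 ≤ ‖l'‖ →
      (powerBall b s l ∩ powerBall a r k).Nonempty →
      (powerBall b s l' ∩ powerBall a r k).Nonempty → ‖l - l'‖ ≤ C := by
  have hb : 0 ≤ b := ha.trans hab
  set q := b / (b + 1)
  have hq : 0 ≤ q := by positivity
  set A₁ := 2 * (1 + r) + (2 * s) ^ (b + 1)
  set A₂ := 2 * (1 + s) + (2 * r) ^ (a + 1)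
  have hA₁ : 0 ≤ A₁ := by positivity
  have hA₂ : 0 < A₂ := by positivity
  refine ⟨(2 * s * A₁ ^ q + 2 * r) * A₂ ^ q, fun k l l' hk hl hl' h h' => ?_⟩
  set K := ‖k‖ ^ (a + 1)
  have hK : 0 ≤ K := by positivity
  -- All radii involved are `≍ K ^ q`; for `b = β / (1 - β)` this is the familiar `K ^ β`.
  have hweight : ∀ m : E, 1 ≤ ‖m‖ → (powerBall b s m ∩ powerBall a r k).Nonempty →
      ‖m‖ ^ b ≤ A₁ ^ q * K ^ q ∧ K ^ q ≤ A₂ ^ q * ‖m‖ ^ b := by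
    intro m hm hmk
    have hm0 : 0 < ‖m‖ := one_pos.trans_le hm
    rw [← rpow_add_one_rpow_div_add_one hm0.le hb, ← mul_rpow hA₁ hK,
      ← mul_rpow hA₂.le (by positivity)]
    exact ⟨rpow_le_rpow (by positivity)
        (rpow_add_one_le_mul_of_powerBall_inter_nonempty hb ha hs hr hm0 hk hmk) hq,
      rpow_le_rpow hK (rpow_add_one_le_mul_of_powerBall_inter_nonempty ha hb hr hs
        (one_pos.trans_le hk) hm (Set.inter_comm _ _ ▸ hmk)) hq⟩
  obtain ⟨hl₁, hl₂⟩ := hweight l hl h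
  obtain ⟨hl'₁, hl'₂⟩ := hweight l' hl' h'
  have hka : ‖k‖ ^ a ≤ K ^ q := by
    rw [← rpow_mul (by positivity)]
    refine rpow_le_rpow_of_exponent_le hk ?_
    rw [mul_div_assoc', le_div_iff₀ (by positivity)]
    nlinarith
  have hcentres :
      ‖‖l‖ ^ b • l - ‖l'‖ ^ b • l'‖ < s * ‖l‖ ^ b + s * ‖l'‖ ^ b + 2 * r * ‖k‖ ^ a := by
    rw [← dist_eq_norm]
    linarith [dist_triangle_right (‖l‖ ^ b • l) (‖l'‖ ^ b • l') (‖k‖ ^ a • k),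
      dist_lt_add_of_nonempty_ball_inter_ball h, dist_lt_add_of_nonempty_ball_inter_ball h']
  have ht : 0 < K ^ q / A₂ ^ q := by
    have : 0 < K := rpow_pos_of_pos (one_pos.trans_le hk) _
    positivity
  have hexpand := mul_norm_sub_le_norm_rpow_smul_sub hb (t := K ^ q / A₂ ^ q)
    (div_le_of_le_mul₀ (by positivity) (by positivity) (hl₂.trans_eq (mul_comm _ _)))
    (div_le_of_le_mul₀ (by positivity) (by positivity) (hl'₂.trans_eq (mul_comm _ _)))
  refine le_of_mul_le_mul_right ?_ ht
  calc ‖l - l'‖ * (K ^ q / A₂ ^ q) ≤ s * ‖l‖ ^ b + s * ‖l'‖ ^ b + 2 * r * ‖k‖ ^ a := by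
        linarith
    _ ≤ (2 * s * A₁ ^ q + 2 * r) * K ^ q := by nlinarith
    _ = (2 * s * A₁ ^ q + 2 * r) * A₂ ^ q * (K ^ q / A₂ ^ q) := by
        field_simp

end PowerBall

section Lattice

variable {d : ℕ}

theorem abs_le_norm_intVec (k : Fin d → ℤ) (i : Fin d) : |(k i : ℝ)| ≤ ‖intVec k‖ :=
  PiLp.norm_apply_le (intVec k) i

theorem one_le_norm_intVec {k : Fin d → ℤ} (hk : k ≠ 0) : 1 ≤ ‖intVec k‖ := by
  obtain ⟨i, hi⟩ := Function.ne_iff.1 hk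
  exact le_trans (by exact_mod_cast Int.one_le_abs hi) (abs_le_norm_intVec k i)

theorem intVec_sub (k l : Fin d → ℤ) : intVec (k - l) = intVec k - intVec l := by
  ext i
  simp [intVec]

theorem exists_encard_le_of_norm_intVec_sub_le (d : ℕ) (C : ℝ) :
    ∃ N : ℕ, ∀ J : Set (Fin d → ℤ), (∀ l ∈ J, ∀ l' ∈ J, ‖intVec l - intVec l'‖ ≤ C) →
      J.encard ≤ N := by
  set c : Fin d → ℤ := fun _ => ⌊C⌋
  refine ⟨(Finset.Icc (-c) c).card, fun J hJ => ?_⟩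
  rcases J.eq_empty_or_nonempty with rfl | ⟨l₀, hl₀⟩
  · simp
  calc J.encard = ((· - l₀) '' J).encard := (sub_left_injective.injOn).encard_image.symm
    _ ≤ (Finset.Icc (-c) c : Set (Fin d → ℤ)).encard := Set.encard_le_encard ?_
    _ = (Finset.Icc (-c) c).card := Set.encard_coe_eq_coe_finsetCard _
  rintro _ ⟨l, hl, rfl⟩
  have hcoord : ∀ i, |l i - l₀ i| ≤ ⌊C⌋ := fun i => Int.le_floor.2 <| by
    have := (abs_le_norm_intVec (l - l₀) i).trans (intVec_sub l l₀ ▸ hJ l hl l₀ hl₀)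
    exact_mod_cast this
  simp only [Finset.coe_Icc, Set.mem_Icc]
  exact ⟨fun i => neg_le_of_abs_le (hcoord i), fun i => le_of_abs_le (hcoord i)⟩

end Lattice

theorem exists_encard_alphaBall_inter_nonempty_le {d : ℕ} {α β rα rβ : ℝ} (hα0 : 0 ≤ α)
    (hαβ : α ≤ β) (hβ1 : β < 1) (hrα : 0 ≤ rα) (hrβ : 0 ≤ rβ) :
    ∃ N : ℕ, ∀ k : Fin d → ℤ, k ≠ 0 →
      {l : {l : Fin d → ℤ // l ≠ 0} | (alphaBall d β rβ l ∩ alphaBall d α rα k).Nonempty}.encard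
        ≤ N := by
  have hα₀β₀ : α / (1 - α) ≤ β / (1 - β) := by
    rw [div_le_div_iff₀ (by linarith) (by linarith)]
    nlinarith
  obtain ⟨C, hC⟩ := exists_norm_sub_le_of_powerBall_inter_nonempty
    (E := EuclideanSpace ℝ (Fin d)) (div_nonneg hα0 (by linarith)) hα₀β₀ hrα hrβ
  obtain ⟨N, hN⟩ := exists_encard_le_of_norm_intVec_sub_le d C
  refine ⟨N, fun k hk => ?_⟩
  rw [← Subtype.val_injective.encard_image]
  refine hN _ ?_
  rintro _ ⟨l, hl, rfl⟩ _ ⟨l', hl', rfl⟩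
  exact hC _ _ _ (one_le_norm_intVec hk) (one_le_norm_intVec l.2) (one_le_norm_intVec l'.2) hl hl'

theorem alpha_covering_almost_subordinate_general
    {d : ℕ} (α β : ℝ) (hα0 : 0 ≤ α) (hαβ : α ≤ β) (hβ1 : β < 1)
    (rα rβ : ℝ) (hrα : 0 < rα) (hrβ : 0 < rβ)
    (hcovβ : (⋃ k ∈ {k : Fin d → ℤ | k ≠ 0}, alphaBall d β rβ k) = Set.univ) :
    ∃ n : ℕ, ∀ k : {k : Fin d → ℤ // k ≠ 0}, ∃ j : {k : Fin d → ℤ // k ≠ 0},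
      alphaBall d α rα k.1 ⊆
        ⋃ l ∈ neighborIter (fun m : {k : Fin d → ℤ // k ≠ 0} => alphaBall d β rβ m.1) j n,
          alphaBall d β rβ l.1 := by
  obtain ⟨N, hN⟩ := exists_encard_alphaBall_inter_nonempty_le hα0 hαβ hβ1 hrα.le hrβ.le
  have hcov (ξ : EuclideanSpace ℝ (Fin d)) :
      ∃ j : {k : Fin d → ℤ // k ≠ 0}, ξ ∈ alphaBall d β rβ j := by
    simpa using hcovβ.ge (Set.mem_univ ξ)
  refine ⟨N, fun k => ?_⟩
  have hk : 0 < ‖intVec k.1‖ := one_pos.trans_le (one_le_norm_intVec k.2)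
  have hcentre : ‖intVec k.1‖ ^ (α / (1 - α)) • intVec k.1 ∈ alphaBall d α rα k :=
    Metric.mem_ball_self (by positivity)
  obtain ⟨j, hj⟩ := hcov _
  exact ⟨j, (convex_ball _ _).isPreconnected.subset_biUnion_neighborIter
    (fun _ => Metric.isOpen_ball) (fun ξ _ => Set.mem_iUnion.2 (hcov ξ)) (hN k.1 k.2)
    ⟨_, hj, hcentre⟩⟩

/-- For `0 ≤ α ≤ β < 1` and radii `r_α, r_β` for which the corresponding
`α`- and `β`-coverings of `ℝ^d` cover `ℝ^d` and have the finite overlap property, the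
`α`-covering is almost subordinate to the `β`-covering: there is `n ∈ ℕ` such that every
`B_k^{r_α,α}` is contained in the `n`-fold neighborhood `⋃_{l ∈ j^{n*}} B_l^{r_β,β}` of some
`B_j^{r_β,β}`. -/
theorem alpha_covering_almost_subordinate
    {d : ℕ} (hd : 1 ≤ d) (α β : ℝ) (hα0 : 0 ≤ α) (hαβ : α ≤ β) (hβ1 : β < 1)
    (rα rβ : ℝ) (hrα : 0 < rα) (hrβ : 0 < rβ)
    (hcovα : (⋃ k ∈ {k : Fin d → ℤ | k ≠ 0}, alphaBall d α rα k) = Set.univ)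
    (hcovβ : (⋃ k ∈ {k : Fin d → ℤ | k ≠ 0}, alphaBall d β rβ k) = Set.univ)
    (hovα : ∃ N : ℕ, ∀ k : Fin d → ℤ, k ≠ 0 →
      {l : Fin d → ℤ | l ≠ 0 ∧ (alphaBall d α rα l ∩ alphaBall d α rα k).Nonempty}.Finite ∧
      {l : Fin d → ℤ | l ≠ 0 ∧ (alphaBall d α rα l ∩ alphaBall d α rα k).Nonempty}.ncard ≤ N)
    (hovβ : ∃ N : ℕ, ∀ k : Fin d → ℤ, k ≠ 0 →
      {l : Fin d → ℤ | l ≠ 0 ∧ (alphaBall d β rβ l ∩ alphaBall d β rβ k).Nonempty}.Finite ∧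
      {l : Fin d → ℤ | l ≠ 0 ∧ (alphaBall d β rβ l ∩ alphaBall d β rβ k).Nonempty}.ncard ≤ N) :
    ∃ n : ℕ, ∀ k : {k : Fin d → ℤ // k ≠ 0}, ∃ j : {k : Fin d → ℤ // k ≠ 0},
      alphaBall d α rα k.1 ⊆
        ⋃ l ∈ neighborIter (fun m : {k : Fin d → ℤ // k ≠ 0} => alphaBall d β rβ m.1) j n,
          alphaBall d β rβ l.1 :=
  alpha_covering_almost_subordinate_general α β hα0 hαβ hβ1 rα rβ hrα hrβ hcovβ
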